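/- arXiv:1902.09584 — 6 statements merged into one kernel-verified Lean document; each statement's English description precedes it below -/
import Mathlib

section
/- (Sorted downward closure property.) Let X and X' be nonempty itemsets with X' ⊆ X ⊆ I such that mu(i) ≤ mu(j) for every i ∈ X' and every j ∈ X \ X' (i.e., X' is a prefix of X when the items of X are sorted in ascending order of mu values). If X is an HTWUI, i.e., TWU(X) ≥ MIU(X), then X' is also an HTWUI, i.e., TWU(X') ≥ MIU(X'); moreover MIU(X') = MIU(X). -/
open Finset

variable {ι τ : Type*}

/-- Utility of item `i` in transaction `t`: quantity times unit profit. -/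
def itemU (pr : ι → ℝ) (q : ι → τ → ℕ) (i : ι) (t : τ) : ℝ :=
  (q i t : ℝ) * pr i

/-- Utility of itemset `X` in transaction `t`. -/
def setU (pr : ι → ℝ) (q : ι → τ → ℕ) (X : Finset ι) (t : τ) : ℝ :=
  ∑ i ∈ X, itemU pr q i t

/-- Transaction utility of transaction `t` (with item set `Tr t`). -/
def tu (pr : ι → ℝ) (q : ι → τ → ℕ) (Tr : τ → Finset ι) (t : τ) : ℝ :=
  ∑ i ∈ Tr t, itemU pr q i t

/-- Transaction-weighted utility of itemset `X` in database `D`. -/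
def TWU [DecidableEq ι] (pr : ι → ℝ) (q : ι → τ → ℕ) (Tr : τ → Finset ι)
    (D : Finset τ) (X : Finset ι) : ℝ :=
  ∑ t ∈ D.filter (fun t => X ⊆ Tr t), tu pr q Tr t

/-- Utility of itemset `X` in database `D`. -/
def dbU [DecidableEq ι] (pr : ι → ℝ) (q : ι → τ → ℕ) (Tr : τ → Finset ι)
    (D : Finset τ) (X : Finset ι) : ℝ :=
  ∑ t ∈ D.filter (fun t => X ⊆ Tr t), setU pr q X t

/-- Minimum itemset utility of a nonempty itemset `X`. -/
def MIU (mu : ι → ℝ) (X : Finset ι) (hX : X.Nonempty) : ℝ :=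
  X.inf' hX mu

/-- Remaining utility of itemset `X` in transaction `t`: total utility of the items of
`Tr t` that come strictly after every item of `X`. -/
def ru [LinearOrder ι] (pr : ι → ℝ) (q : ι → τ → ℕ) (Tr : τ → Finset ι)
    (X : Finset ι) (t : τ) : ℝ :=
  ∑ i ∈ (Tr t).filter (fun i => ∀ x ∈ X, x < i), itemU pr q i t

/-- Sum of the remaining utilities of itemset `X` over the database `D` (`X.RU`). -/
def dbRU [LinearOrder ι] (pr : ι → ℝ) (q : ι → τ → ℕ) (Tr : τ → Finset ι)
    (D : Finset τ) (X : Finset ι) : ℝ :=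
  ∑ t ∈ D.filter (fun t => X ⊆ Tr t), ru pr q Tr X t

theorem Finset.inf'_eq_of_subset_of_forall_le {α β : Type*} [SemilatticeInf α] [DecidableEq β]
    {s t : Finset β} {f : β → α} (hs : s.Nonempty) (ht : t.Nonempty) (hst : s ⊆ t)
    (hle : ∀ i ∈ s, ∀ j ∈ t \ s, f i ≤ f j) : s.inf' hs f = t.inf' ht f := by
  refine le_antisymm (Finset.le_inf' _ _ fun j hj => ?_) (Finset.inf'_mono f hst hs)
  by_cases hjs : j ∈ s
  · exact Finset.inf'_le f hjs
  · obtain ⟨i, hi⟩ := hs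
    exact (Finset.inf'_le f hi).trans (hle i hi j (Finset.mem_sdiff.mpr ⟨hj, hjs⟩))

theorem tu_nonneg {pr : ι → ℝ} (hpr : ∀ i, 0 ≤ pr i) (q : ι → τ → ℕ) (Tr : τ → Finset ι)
    (t : τ) : 0 ≤ tu pr q Tr t :=
  Finset.sum_nonneg fun i _ => mul_nonneg (Nat.cast_nonneg _) (hpr i)

theorem TWU_anti [DecidableEq ι] {pr : ι → ℝ} (hpr : ∀ i, 0 ≤ pr i) (q : ι → τ → ℕ)
    (Tr : τ → Finset ι) (D : Finset τ) : Antitone (TWU pr q Tr D) := fun _ _ hXY =>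
  Finset.sum_le_sum_of_subset_of_nonneg (Finset.monotone_filter_right D fun _ _ => hXY.trans)
    fun t _ _ => tu_nonneg hpr q Tr t

theorem sorted_downward_closure_general [DecidableEq ι] (pr mu : ι → ℝ)
    (hpr : ∀ i, 0 ≤ pr i)
    (D : Finset τ) (Tr : τ → Finset ι) (q : ι → τ → ℕ)
    (X X' : Finset ι) (hX : X.Nonempty) (hX' : X'.Nonempty)
    (hsub : X' ⊆ X)
    (hprefix : ∀ i ∈ X', ∀ j ∈ X \ X', mu i ≤ mu j)
    (hHTWUI : TWU pr q Tr D X ≥ MIU mu X hX) :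
    TWU pr q Tr D X' ≥ MIU mu X' hX' ∧ MIU mu X' hX' = MIU mu X hX := by
  have hMIU : MIU mu X' hX' = MIU mu X hX :=
    Finset.inf'_eq_of_subset_of_forall_le hX' hX hsub hprefix
  refine ⟨?_, hMIU⟩
  calc MIU mu X' hX' = MIU mu X hX := hMIU
    _ ≤ TWU pr q Tr D X := hHTWUI
    _ ≤ TWU pr q Tr D X' := TWU_anti hpr q Tr D hsub

/-- sorted downward closure property. If `X'` is a prefix of `X` in ascending
order of `mu` values and `X` is an HTWUI, then `X'` is an HTWUI and `MIU(X') = MIU(X)`. -/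
theorem sorted_downward_closure [DecidableEq ι] (I : Finset ι) (pr mu : ι → ℝ)
    (hpr : ∀ i, 0 ≤ pr i) (hmu : ∀ i, 0 < mu i)
    (D : Finset τ) (Tr : τ → Finset ι) (q : ι → τ → ℕ)
    (hq : ∀ t ∈ D, ∀ i ∈ Tr t, 0 < q i t) (hTr : ∀ t ∈ D, Tr t ⊆ I)
    (X X' : Finset ι) (hX : X.Nonempty) (hX' : X'.Nonempty)
    (hsub : X' ⊆ X) (hXI : X ⊆ I)
    (hprefix : ∀ i ∈ X', ∀ j ∈ X \ X', mu i ≤ mu j)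
    (hHTWUI : TWU pr q Tr D X ≥ MIU mu X hX) :
    TWU pr q Tr D X' ≥ MIU mu X' hX' ∧ MIU mu X' hX' = MIU mu X hX :=
  sorted_downward_closure_general pr mu hpr D Tr q X X' hX hX' hsub hprefix hHTWUI
end

section
/- For every itemset X ⊆ I, the utility of X in the database is bounded above by its transaction-weighted utility: u(X) ≤ TWU(X). -/
open Finset

variable {ι τ : Type*}

theorem itemU_nonneg (pr : ι → ℝ) (q : ι → τ → ℕ) {i : ι} (hpr : 0 ≤ pr i) (t : τ) :
    0 ≤ itemU pr q i t :=
  mul_nonneg (Nat.cast_nonneg _) hpr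

theorem setU_mono {pr : ι → ℝ} (q : ι → τ → ℕ) (hpr : ∀ i, 0 ≤ pr i) {X Y : Finset ι}
    (hXY : X ⊆ Y) (t : τ) : setU pr q X t ≤ setU pr q Y t :=
  sum_le_sum_of_subset_of_nonneg hXY fun i _ _ => itemU_nonneg pr q (hpr i) t

theorem setU_le_tu {pr : ι → ℝ} (q : ι → τ → ℕ) (hpr : ∀ i, 0 ≤ pr i) {Tr : τ → Finset ι}
    {X : Finset ι} {t : τ} (hX : X ⊆ Tr t) : setU pr q X t ≤ tu pr q Tr t :=
  setU_mono q hpr hX t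

theorem utility_le_TWU_general [DecidableEq ι] (pr : ι → ℝ)
    (hpr : ∀ i, 0 ≤ pr i) (D : Finset τ) (Tr : τ → Finset ι) (q : ι → τ → ℕ)
    (X : Finset ι) :
    dbU pr q Tr D X ≤ TWU pr q Tr D X :=
  sum_le_sum fun _ ht => setU_le_tu q hpr (mem_filter.1 ht).2

/-- for every itemset `X ⊆ I`, `u(X) ≤ TWU(X)`. -/
theorem utility_le_TWU [DecidableEq ι] (I : Finset ι) (pr : ι → ℝ)
    (hpr : ∀ i, 0 ≤ pr i) (D : Finset τ) (Tr : τ → Finset ι) (q : ι → τ → ℕ)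
    (hq : ∀ t ∈ D, ∀ i ∈ Tr t, 0 < q i t) (hTr : ∀ t ∈ D, Tr t ⊆ I)
    (X : Finset ι) (hXI : X ⊆ I) :
    dbU pr q Tr D X ≤ TWU pr q Tr D X :=
  utility_le_TWU_general pr hpr D Tr q X
end

section
/- The TWU of any node in the MIU-tree is no less than the actual database utility of any of its descendant nodes: for itemsets X ⊆ Y ⊆ I, u(Y) ≤ TWU(X). -/
open Finset

variable {ι τ : Type*}

/-- the TWU of a node is no less than the database utility of any of its
descendant nodes: for `X ⊆ Y ⊆ I`, `u(Y) ≤ TWU(X)`. -/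
theorem dbU_descendant_le_TWU [DecidableEq ι] (I : Finset ι) (pr : ι → ℝ)
    (hpr : ∀ i, 0 ≤ pr i) (D : Finset τ) (Tr : τ → Finset ι) (q : ι → τ → ℕ)
    (hq : ∀ t ∈ D, ∀ i ∈ Tr t, 0 < q i t) (hTr : ∀ t ∈ D, Tr t ⊆ I)
    (X Y : Finset ι) (hXY : X ⊆ Y) (hYI : Y ⊆ I) :
    dbU pr q Tr D Y ≤ TWU pr q Tr D X := by
  have h0 : ∀ i t, 0 ≤ itemU pr q i t := fun i t =>
    mul_nonneg (Nat.cast_nonneg _) (hpr i)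
  calc dbU pr q Tr D Y ≤ ∑ t ∈ D.filter (fun t => Y ⊆ Tr t), tu pr q Tr t := by
        apply Finset.sum_le_sum
        intro t ht
        exact Finset.sum_le_sum_of_subset_of_nonneg (Finset.mem_filter.mp ht).2
          (fun i _ _ => h0 i t)
    _ ≤ TWU pr q Tr D X := by
        apply Finset.sum_le_sum_of_subset_of_nonneg
        · exact Finset.monotone_filter_right D (fun t _ h => hXY.trans h)
        · intro t _ _
          exact Finset.sum_nonneg fun i _ => h0 i t
end

section
/- (Conditional downward closure property.) Let ≺ be a strict linear order on I and X a nonempty itemset. For every extension Y of X (i.e., X ⊆ Y and every item j ∈ Y \ X satisfies x ≺ j for all x ∈ X), the database utility of Y is bounded by the sum of the utilities and remaining utilities of X: u(Y) ≤ X.IU + X.RU, where X.IU = ∑_{T∈D : X⊆T} u(X,T) and X.RU = ∑_{T∈D : X⊆T} ru(X,T). -/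
open Finset

variable {ι τ : Type*}

/-- conditional downward closure property. For every extension `Y` of a
nonempty itemset `X`, `u(Y) ≤ X.IU + X.RU`. -/
theorem conditional_downward_closure [LinearOrder ι] (I : Finset ι) (pr : ι → ℝ)
    (hpr : ∀ i, 0 ≤ pr i) (D : Finset τ) (Tr : τ → Finset ι) (q : ι → τ → ℕ)
    (hq : ∀ t ∈ D, ∀ i ∈ Tr t, 0 < q i t) (hTr : ∀ t ∈ D, Tr t ⊆ I)
    (X Y : Finset ι) (hX : X.Nonempty) (hXY : X ⊆ Y) (hYI : Y ⊆ I)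
    (hext : ∀ j ∈ Y \ X, ∀ x ∈ X, x < j) :
    dbU pr q Tr D Y ≤ dbU pr q Tr D X + dbRU pr q Tr D X := by
  classical
  have hitem : ∀ i t, 0 ≤ itemU pr q i t := fun i t => by
    exact mul_nonneg (Nat.cast_nonneg _) (hpr i)
  have step1 : dbU pr q Tr D Y ≤
      ∑ t ∈ D.filter (fun t => Y ⊆ Tr t), (setU pr q X t + ru pr q Tr X t) := by
    apply Finset.sum_le_sum
    intro t ht
    have hYt : Y ⊆ Tr t := (Finset.mem_filter.mp ht).2
    have hsplit : setU pr q Y t = setU pr q X t + ∑ i ∈ Y \ X, itemU pr q i t := by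
      unfold setU
      rw [← Finset.sum_sdiff hXY, add_comm]
    rw [hsplit]
    apply add_le_add_right
    apply Finset.sum_le_sum_of_subset_of_nonneg
    · intro j hj
      exact Finset.mem_filter.mpr ⟨hYt (Finset.mem_sdiff.mp hj).1, hext j hj⟩
    · intro i _ _
      exact hitem i t
  have step2 : ∑ t ∈ D.filter (fun t => Y ⊆ Tr t), (setU pr q X t + ru pr q Tr X t) ≤
      ∑ t ∈ D.filter (fun t => X ⊆ Tr t), (setU pr q X t + ru pr q Tr X t) := by
    apply Finset.sum_le_sum_of_subset_of_nonneg
    · intro t ht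
      have := Finset.mem_filter.mp ht
      exact Finset.mem_filter.mpr ⟨this.1, hXY.trans this.2⟩
    · intro t _ _
      exact add_nonneg (Finset.sum_nonneg fun i _ => hitem i t)
        (Finset.sum_nonneg fun i _ => hitem i t)
  calc dbU pr q Tr D Y ≤ _ := step1
    _ ≤ _ := step2
    _ = dbU pr q Tr D X + dbRU pr q Tr D X := by
        rw [dbU, dbRU, ← Finset.sum_add_distrib]
end

section
/- (Correctness of pruning Strategy 2.) Let ≺ be a strict linear order on I that is ascending in mu (i.e., i ≺ j implies mu(i) ≤ mu(j)), and let X be a nonempty itemset. If X.IU + X.RU < MIU(X), then no extension Y of X (i.e., X ⊆ Y with every item j ∈ Y \ X satisfying x ≺ j for all x ∈ X) is an HUI: u(Y) < MIU(Y) for every such Y. -/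
open Finset

variable {ι τ : Type*}

/-- correctness of pruning Strategy 2. If the order is ascending in `mu`
and `X.IU + X.RU < MIU(X)`, then no extension of `X` is an HUI. -/
theorem strategy2_correct [LinearOrder ι] (I : Finset ι) (pr mu : ι → ℝ)
    (hpr : ∀ i, 0 ≤ pr i) (hmu : ∀ i, 0 < mu i)
    (hasc : ∀ i j : ι, i < j → mu i ≤ mu j)
    (D : Finset τ) (Tr : τ → Finset ι) (q : ι → τ → ℕ)
    (hq : ∀ t ∈ D, ∀ i ∈ Tr t, 0 < q i t) (hTr : ∀ t ∈ D, Tr t ⊆ I)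
    (X : Finset ι) (hX : X.Nonempty) (hXI : X ⊆ I)
    (hprune : dbU pr q Tr D X + dbRU pr q Tr D X < MIU mu X hX) :
    ∀ (Y : Finset ι) (hXY : X ⊆ Y), Y ⊆ I → (∀ j ∈ Y \ X, ∀ x ∈ X, x < j) →
      dbU pr q Tr D Y < MIU mu Y (hX.mono hXY) := by
  intro Y hXY hYI hext
  classical
  have hitem : ∀ i t, 0 ≤ itemU pr q i t := fun i t =>
    mul_nonneg (Nat.cast_nonneg _) (hpr i)
  -- MIU X ≤ MIU Y
  have hMIU : MIU mu X hX ≤ MIU mu Y (hX.mono hXY) := by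
    apply Finset.le_inf'
    intro y hy
    by_cases hyX : y ∈ X
    · exact Finset.inf'_le _ hyX
    · obtain ⟨x0, hx0⟩ := id hX
      calc MIU mu X hX ≤ mu x0 := Finset.inf'_le _ hx0
        _ ≤ mu y := hasc _ _ (hext y (Finset.mem_sdiff.2 ⟨hy, hyX⟩) x0 hx0)
  -- dbU Y ≤ dbU X + dbRU X
  have hsub : D.filter (fun t => Y ⊆ Tr t) ⊆ D.filter (fun t => X ⊆ Tr t) := by
    intro t ht
    rw [Finset.mem_filter] at ht ⊢
    exact ⟨ht.1, hXY.trans ht.2⟩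
  have hle : dbU pr q Tr D Y ≤ dbU pr q Tr D X + dbRU pr q Tr D X := by
    unfold dbU dbRU
    rw [← Finset.sum_add_distrib]
    apply le_trans (Finset.sum_le_sum (f := setU pr q Y)
      (g := fun t => setU pr q X t + ru pr q Tr X t) ?_)
    · apply Finset.sum_le_sum_of_subset_of_nonneg hsub
      intro t _ _
      exact add_nonneg (Finset.sum_nonneg fun i _ => hitem i t)
        (Finset.sum_nonneg fun i _ => hitem i t)
    · intro t ht
      rw [Finset.mem_filter] at ht
      have hYT : Y ⊆ Tr t := ht.2
      have : setU pr q Y t = setU pr q X t + setU pr q (Y \ X) t := by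
        unfold setU
        rw [← Finset.sum_union (Finset.disjoint_sdiff), Finset.union_sdiff_of_subset hXY]
      rw [this]
      apply add_le_add_right
      unfold setU ru
      apply Finset.sum_le_sum_of_subset_of_nonneg
      · intro j hj
        rw [Finset.mem_filter]
        exact ⟨hYT (Finset.mem_sdiff.1 hj).1, hext j hj⟩
      · intro i _ _; exact hitem i t
  exact lt_of_le_of_lt hle (lt_of_lt_of_le hprune hMIU)
end

section
/- (LA-Prune bound.) Let ≺ be a strict linear order on I, X a nonempty itemset, and y an item with x ≺ y for every x ∈ X. Then for every extension Y of X containing y (i.e., X ∪ {y} ⊆ Y and every item j ∈ Y \ X satisfies x ≺ j for all x ∈ X), u(Y) ≤ (X.IU + X.RU) − ∑_{T∈D : X⊆T and y∉T} (u(X,T) + ru(X,T)). -/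
open Finset

variable {ι τ : Type*}

/-- LA-Prune bound. For every extension `Y` of `X` that contains `y`,
`u(Y) ≤ (X.IU + X.RU) - ∑_{t ∈ D, X ⊆ t, y ∉ t} (u(X,t) + ru(X,t))`. -/
theorem LA_prune_bound [LinearOrder ι] (I : Finset ι) (pr : ι → ℝ)
    (hpr : ∀ i, 0 ≤ pr i) (D : Finset τ) (Tr : τ → Finset ι) (q : ι → τ → ℕ)
    (hq : ∀ t ∈ D, ∀ i ∈ Tr t, 0 < q i t) (hTr : ∀ t ∈ D, Tr t ⊆ I)
    (X : Finset ι) (hX : X.Nonempty) (hXI : X ⊆ I)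
    (y : ι) (hyI : y ∈ I) (hy : ∀ x ∈ X, x < y)
    (Y : Finset ι) (hXyY : X ∪ {y} ⊆ Y) (hYI : Y ⊆ I)
    (hext : ∀ j ∈ Y \ X, ∀ x ∈ X, x < j) :
    dbU pr q Tr D Y ≤ (dbU pr q Tr D X + dbRU pr q Tr D X) -
      ∑ t ∈ D.filter (fun t => X ⊆ Tr t ∧ y ∉ Tr t),
        (setU pr q X t + ru pr q Tr X t) := by
  classical
  have hitem : ∀ i t, 0 ≤ itemU pr q i t := fun i t =>
    mul_nonneg (Nat.cast_nonneg _) (hpr i)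
  have hf : ∀ t, 0 ≤ setU pr q X t + ru pr q Tr X t := fun t =>
    add_nonneg (Finset.sum_nonneg fun i _ => hitem i t)
      (Finset.sum_nonneg fun i _ => hitem i t)
  -- per-transaction bound
  have hper : ∀ t, Y ⊆ Tr t → setU pr q Y t ≤ setU pr q X t + ru pr q Tr X t := by
    intro t ht
    have hXY : X ⊆ Y := (Finset.union_subset_iff.mp hXyY).1
    have : setU pr q Y t = setU pr q X t + ∑ i ∈ Y \ X, itemU pr q i t := by
      rw [setU, ← Finset.sum_sdiff hXY, setU]; ring
    rw [this]
    refine add_le_add le_rfl ?_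
    refine Finset.sum_le_sum_of_subset_of_nonneg ?_ (fun i _ _ => hitem i t)
    intro i hi
    simp only [Finset.mem_filter]
    exact ⟨ht (Finset.mem_sdiff.mp hi).1, hext i hi⟩
  set f : τ → ℝ := fun t => setU pr q X t + ru pr q Tr X t with hfdef
  have hsplit : D.filter (fun t => X ⊆ Tr t) =
      (D.filter (fun t => X ⊆ Tr t ∧ y ∈ Tr t)) ∪
      (D.filter (fun t => X ⊆ Tr t ∧ y ∉ Tr t)) := by
    rw [← Finset.filter_or]
    apply Finset.filter_congr
    intro t _
    by_cases h : y ∈ Tr t <;> simp [h]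
  have hdisj : Disjoint (D.filter (fun t => X ⊆ Tr t ∧ y ∈ Tr t))
      (D.filter (fun t => X ⊆ Tr t ∧ y ∉ Tr t)) := by
    apply Finset.disjoint_filter_filter'
    exact Set.disjoint_left.mpr (by rintro t ⟨_, h⟩ ⟨_, h'⟩; exact h' h)
  have hRHS : (dbU pr q Tr D X + dbRU pr q Tr D X) -
      ∑ t ∈ D.filter (fun t => X ⊆ Tr t ∧ y ∉ Tr t), f t
      = ∑ t ∈ D.filter (fun t => X ⊆ Tr t ∧ y ∈ Tr t), f t := by
    rw [dbU, dbRU, ← Finset.sum_add_distrib]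
    rw [hsplit, Finset.sum_union hdisj]
    simp [hfdef]
  rw [hRHS]
  calc dbU pr q Tr D Y ≤ ∑ t ∈ D.filter (fun t => Y ⊆ Tr t), f t := by
        apply Finset.sum_le_sum
        intro t ht
        exact hper t (Finset.mem_filter.mp ht).2
    _ ≤ ∑ t ∈ D.filter (fun t => X ⊆ Tr t ∧ y ∈ Tr t), f t := by
        apply Finset.sum_le_sum_of_subset_of_nonneg ?_ (fun t _ _ => hf t)
        intro t ht
        simp only [Finset.mem_filter] at ht ⊢
        have hXY : X ⊆ Y := (Finset.union_subset_iff.mp hXyY).1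
        have hyY : y ∈ Y := hXyY (by simp)
        exact ⟨ht.1, hXY.trans ht.2, ht.2 hyY⟩
end
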